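/- arXiv:1401.0315 — 3 statements merged into one kernel-verified Lean document; each statement's English description precedes it below -/
import Mathlib

section
/- Let (E,M) be a V-prefactorization system on a V-category B, let B, B' : J → B be V-functors, and let m : B → B' be a V-natural transformation all of whose components m_j : Bj → B'j (j ∈ J) lie in M. Suppose W : J → V is a V-functor for which the V-enriched weighted limits [W,B] and [W,B'] exist in B. Then the induced morphism [W,m] : [W,B] → [W,B'] lies in M. -/
open CategoryTheory CategoryTheory.Limits CategoryTheory.MonoidalCategory

universe w v₁ v₂ v₃ v₄ u₁ u₂ u₃ u₄

namespace EnrichedFS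

variable (V : Type u₁) [Category.{v₁} V] [MonoidalCategory V] [SymmetricCategory V]
  [MonoidalClosed V]
variable (B : Type u₂) [Category.{v₂} B] [EnrichedOrdinaryCategory V B]

/-- `e` is `V`-orthogonal to `m`: the square of hom-objects
with top `B(A₂,m)`, left `B(e,X₁)`, right `B(e,X₂)`, bottom `B(A₁,m)`
is a pullback in `V`. -/
def VOrth {A₁ A₂ X₁ X₂ : B} (e : A₁ ⟶ A₂) (m : X₁ ⟶ X₂) : Prop :=
  IsPullback (eHomWhiskerLeft V A₂ m) (eHomWhiskerRight V e X₁)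
    (eHomWhiskerRight V e X₂) (eHomWhiskerLeft V A₁ m)

/-- `H^{↓V}`: the class of morphisms to which every member of `H` is `V`-orthogonal. -/
def vRlp (H : MorphismProperty B) : MorphismProperty B :=
  fun _ _ m => ∀ ⦃A₁ A₂ : B⦄ (e : A₁ ⟶ A₂), H e → VOrth V B e m

/-- `M^{↑V}`: the class of morphisms which are `V`-orthogonal to every member of `M`. -/
def vLlp (M : MorphismProperty B) : MorphismProperty B :=
  fun _ _ e => ∀ ⦃X₁ X₂ : B⦄ (m : X₁ ⟶ X₂), M m → VOrth V B e m

/-- ordinary orthogonality: unique diagonal fillers for every commutative square. -/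
def OrdOrth {A₁ A₂ X₁ X₂ : B} (e : A₁ ⟶ A₂) (m : X₁ ⟶ X₂) : Prop :=
  ∀ (u : A₁ ⟶ X₁) (v : A₂ ⟶ X₂), u ≫ m = e ≫ v →
    ∃! d : A₂ ⟶ X₁, e ≫ d = u ∧ d ≫ m = v

/-- `H^{↓}` (ordinary). -/
def ordRlp (H : MorphismProperty B) : MorphismProperty B :=
  fun _ _ m => ∀ ⦃A₁ A₂ : B⦄ (e : A₁ ⟶ A₂), H e → OrdOrth B e m

/-- `M^{↑}` (ordinary). -/
def ordLlp (M : MorphismProperty B) : MorphismProperty B :=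
  fun _ _ e => ∀ ⦃X₁ X₂ : B⦄ (m : X₁ ⟶ X₂), M m → OrdOrth B e m

/-- `(E,M)` is a `V`-prefactorization system: `E^{↓V} = M` and `M^{↑V} = E`. -/
def IsVPrefactorization (E M : MorphismProperty B) : Prop :=
  vRlp V B E = M ∧ vLlp V B M = E

/-- `(E,M)` is an ordinary prefactorization system. -/
def IsOrdPrefactorization (E M : MorphismProperty B) : Prop :=
  ordRlp B E = M ∧ ordLlp B M = E

/-- every morphism factors as a morphism in `E` followed by a morphism in `M`. -/
def FactorizationsExist (E M : MorphismProperty B) : Prop :=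
  ∀ ⦃X Y : B⦄ (f : X ⟶ Y), ∃ (Z : B) (e : X ⟶ Z) (m : Z ⟶ Y), E e ∧ M m ∧ e ≫ m = f

/-- `(E,M)` is a `V`-factorization system. -/
def IsVFactorizationSystem (E M : MorphismProperty B) : Prop :=
  IsVPrefactorization V B E M ∧ FactorizationsExist B E M

/-- `(E,M)` is an ordinary factorization system. -/
def IsOrdFactorizationSystem (E M : MorphismProperty B) : Prop :=
  IsOrdPrefactorization B E M ∧ FactorizationsExist B E M

/-- intersection of two classes of morphisms. -/
def interProp (M N : MorphismProperty B) : MorphismProperty B := fun _ _ f => M f ∧ N f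

/-- `V`-monomorphisms. -/
def vMono : MorphismProperty B := fun _ _ m => ∀ A : B, Mono (eHomWhiskerLeft V A m)

/-- `V`-epimorphisms. -/
def vEpi : MorphismProperty B := fun _ _ e => ∀ A : B, Mono (eHomWhiskerRight V e A)

/-- `V`-strong monomorphisms. -/
def vStrongMono : MorphismProperty B := fun _ _ m =>
  vMono V B m ∧ ∀ ⦃A₁ A₂ : B⦄ (e : A₁ ⟶ A₂), vEpi V B e → VOrth V B e m

/-- `V`-strong epimorphisms. -/
def vStrongEpi : MorphismProperty B := fun _ _ e =>
  vEpi V B e ∧ ∀ ⦃X₁ X₂ : B⦄ (m : X₁ ⟶ X₂), vMono V B m → VOrth V B e m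

/-- ordinary monomorphisms, as a class. -/
def ordMono : MorphismProperty B := fun _ _ m => Mono m

/-- ordinary epimorphisms, as a class. -/
def ordEpi : MorphismProperty B := fun _ _ e => Epi e

/-- ordinary strong monomorphisms. -/
def ordStrongMono : MorphismProperty B := fun _ _ m =>
  Mono m ∧ ∀ ⦃A₁ A₂ : B⦄ (e : A₁ ⟶ A₂), Epi e → OrdOrth B e m

/-- ordinary strong epimorphisms. -/
def ordStrongEpi : MorphismProperty B := fun _ _ e =>
  Epi e ∧ ∀ ⦃X₁ X₂ : B⦄ (m : X₁ ⟶ X₂), Mono m → OrdOrth B e m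

/-- closure under composition with isomorphisms on either side. -/
def ClosedUnderIsoComp (E : MorphismProperty B) : Prop :=
  (∀ ⦃X Y Z : B⦄ (e : X ⟶ Y) (i : Y ⟶ Z), E e → IsIso i → E (e ≫ i)) ∧
  (∀ ⦃X Y Z : B⦄ (i : X ⟶ Y) (e : Y ⟶ Z), IsIso i → E e → E (i ≫ e))

/-- a commutative square which is a `V`-pullback: it is sent to a pullback square
in `V` by every hom functor `B(A,-)`. -/
def IsVPullbackSq {P X Y Z : B} (p₁ : P ⟶ X) (p₂ : P ⟶ Y) (f : X ⟶ Z) (g : Y ⟶ Z) : Prop :=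
  p₁ ≫ f = p₂ ≫ g ∧
    ∀ A : B, IsPullback (eHomWhiskerLeft V A p₁) (eHomWhiskerLeft V A p₂)
      (eHomWhiskerLeft V A f) (eHomWhiskerLeft V A g)

/-- a commutative square which is a `V`-pushout: it is sent to a pullback square
in `V` by every hom functor `B(-,A)`. -/
def IsVPushoutSq {X Y₁ Y₂ Q : B} (f₁ : X ⟶ Y₁) (f₂ : X ⟶ Y₂) (i₁ : Y₁ ⟶ Q) (i₂ : Y₂ ⟶ Q) :
    Prop :=
  f₁ ≫ i₁ = f₂ ≫ i₂ ∧
    ∀ A : B, IsPullback (eHomWhiskerRight V i₁ A) (eHomWhiskerRight V i₂ A)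
      (eHomWhiskerRight V f₁ A) (eHomWhiskerRight V f₂ A)

/-- `B` has `V`-kernel pairs. -/
def HasVKernelPairs : Prop :=
  ∀ ⦃X Y : B⦄ (f : X ⟶ Y), ∃ (P : B) (p₁ p₂ : P ⟶ X), IsVPullbackSq V B p₁ p₂ f f

/-- `B` has `V`-cokernel pairs. -/
def HasVCokernelPairs : Prop :=
  ∀ ⦃X Y : B⦄ (f : X ⟶ Y), ∃ (Q : B) (i₁ i₂ : Y ⟶ Q), IsVPushoutSq V B f f i₁ i₂

/-- `m : P ⟶ C` is a `V`-fibre-product (`V`-wide-pullback) of the family `f i : X i ⟶ C`,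
with projections `π i`. -/
def IsVFibreProduct {ι : Type w} {C : B} {X : ι → B} (f : ∀ i, X i ⟶ C)
    {P : B} (m : P ⟶ C) (π : ∀ i, P ⟶ X i) : Prop :=
  (∀ i, π i ≫ f i = m) ∧
    ∀ (A : B) (Z : V) (z : Z ⟶ (A ⟶[V] C)) (zi : ∀ i, Z ⟶ (A ⟶[V] X i)),
      (∀ i, zi i ≫ eHomWhiskerLeft V A (f i) = z) →
        ∃! t : Z ⟶ (A ⟶[V] P), t ≫ eHomWhiskerLeft V A m = z ∧
          ∀ i, t ≫ eHomWhiskerLeft V A (π i) = zi i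

/-- `m : P ⟶ C` is an ordinary fibre product (wide pullback) of the family `f i : X i ⟶ C`. -/
def OrdIsFibreProduct {ι : Type w} {C : B} {X : ι → B} (f : ∀ i, X i ⟶ C)
    {P : B} (m : P ⟶ C) (π : ∀ i, P ⟶ X i) : Prop :=
  (∀ i, π i ≫ f i = m) ∧
    ∀ ⦃W' : B⦄ (z : W' ⟶ C) (zi : ∀ i, W' ⟶ X i), (∀ i, zi i ≫ f i = z) →
      ∃! t : W' ⟶ P, t ≫ m = z ∧ ∀ i, t ≫ π i = zi i

/-- a cone is a `V`-limit cone: it is sent to a limit cone in `V` by every `B(A,-)`. -/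
def IsVLimitCone {J : Type u₃} [Category.{v₃} J] {D : J ⥤ B} (c : Cone D) : Prop :=
  ∀ (A : B) (Z : V) (z : ∀ j : J, Z ⟶ (A ⟶[V] D.obj j)),
    (∀ ⦃j j' : J⦄ (φ : j ⟶ j'), z j ≫ eHomWhiskerLeft V A (D.map φ) = z j') →
      ∃! t : Z ⟶ (A ⟶[V] c.pt), ∀ j, t ≫ eHomWhiskerLeft V A (c.π.app j) = z j

/-- a cocone is a `V`-colimit cocone: it is sent to a limit cone in `V` by every `B(-,A)`. -/
def IsVColimitCocone {J : Type u₃} [Category.{v₃} J] {D : J ⥤ B} (c : Cocone D) : Prop :=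
  ∀ (A : B) (Z : V) (z : ∀ j : J, Z ⟶ (D.obj j ⟶[V] A)),
    (∀ ⦃j j' : J⦄ (φ : j ⟶ j'), z j' ≫ eHomWhiskerRight V (D.map φ) A = z j) →
      ∃! t : Z ⟶ (c.pt ⟶[V] A), ∀ j, t ≫ eHomWhiskerRight V (c.ι.app j) A = z j

/-- `B` has small `V`-limits. -/
def HasSmallVLimits : Prop :=
  ∀ (J : Type v₂) [SmallCategory J] (D : J ⥤ B), ∃ c : Cone D, IsVLimitCone V B c

/-- `B` has small `V`-colimits. -/
def HasSmallVColimits : Prop :=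
  ∀ (J : Type v₂) [SmallCategory J] (D : J ⥤ B), ∃ c : Cocone D, IsVColimitCocone V B c

/-- `B` has finite `V`-limits. -/
def HasFiniteVLimits : Prop :=
  ∀ (J : Type) [SmallCategory J] [FinCategory J] (D : J ⥤ B),
    ∃ c : Cone D, IsVLimitCone V B c

/-- `B` is well-powered with respect to the class `M`: every object has,
up to isomorphism, only a set of `M`-subobjects. -/
def WellPoweredWrt (M : MorphismProperty B) : Prop :=
  ∀ X : B, ∃ (ι : Type v₂) (Y : ι → B) (f : ∀ i, Y i ⟶ X), (∀ i, M (f i)) ∧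
    ∀ ⦃Z : B⦄ (g : Z ⟶ X), M g → ∃ (i : ι) (h : Z ≅ Y i), h.hom ≫ f i = g

/-- `B` is co-well-powered with respect to the class `E`. -/
def CoWellPoweredWrt (E : MorphismProperty B) : Prop :=
  ∀ X : B, ∃ (ι : Type v₂) (Y : ι → B) (f : ∀ i, X ⟶ Y i), (∀ i, E (f i)) ∧
    ∀ ⦃Z : B⦄ (g : X ⟶ Z), E g → ∃ (i : ι) (h : Y i ≅ Z), f i ≫ h.hom = g

/-- comparison morphism `B(T, X) ⟶ [v, B(A, X)]` in `V` induced by a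
unit `η : v ⟶ B(A, T)`, where `T` is a candidate tensor `v ⊗ A`. -/
def tensorComparison {v : V} {A T : B} (η : v ⟶ (A ⟶[V] T)) (X : B) :
    (T ⟶[V] X) ⟶ (ihom v).obj (A ⟶[V] X) :=
  MonoidalClosed.curry (eComp V A T X) ≫ (MonoidalClosed.pre η).app (A ⟶[V] X)

/-- `η : v ⟶ B(A,T)` exhibits `T` as a tensor `v ⊗ A` in the enriched sense. -/
def IsTensorUnit (v : V) (A T : B) (η : v ⟶ (A ⟶[V] T)) : Prop :=
  ∀ X : B, IsIso (tensorComparison V B η X)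

/-- `B` is tensored over `V`. -/
def Tensored : Prop :=
  ∀ (v : V) (A : B), ∃ (T : B) (η : v ⟶ (A ⟶[V] T)), IsTensorUnit V B v A T η

/-- `E` is closed under tensors: whenever tensors exist, `v ⊗ e` lies in `E` for `e ∈ E`. -/
def ClosedUnderTensors (E : MorphismProperty B) : Prop :=
  ∀ (v : V) ⦃A₁ A₂ : B⦄ (e : A₁ ⟶ A₂) {T₁ T₂ : B}
    (η₁ : v ⟶ (A₁ ⟶[V] T₁)) (η₂ : v ⟶ (A₂ ⟶[V] T₂)),
    IsTensorUnit V B v A₁ T₁ η₁ → IsTensorUnit V B v A₂ T₂ η₂ → E e →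
      ∀ t : T₁ ⟶ T₂, η₁ ≫ eHomWhiskerLeft V A₁ t = η₂ ≫ eHomWhiskerRight V e T₂ → E t

/-- comparison morphism `B(A, C) ⟶ [v, B(A, X)]` in `V` induced by a
counit `ε : v ⟶ B(C, X)`, where `C` is a candidate cotensor `[v, X]`. -/
def cotensorComparison {v : V} {C X : B} (ε : v ⟶ (C ⟶[V] X)) (A : B) :
    (A ⟶[V] C) ⟶ (ihom v).obj (A ⟶[V] X) :=
  MonoidalClosed.curry ((β_ (C ⟶[V] X) (A ⟶[V] C)).hom ≫ eComp V A C X) ≫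
    (MonoidalClosed.pre ε).app (A ⟶[V] X)

/-- `ε : v ⟶ B(C,X)` exhibits `C` as a cotensor `[v, X]` in the enriched sense. -/
def IsCotensorCounit (v : V) (X C : B) (ε : v ⟶ (C ⟶[V] X)) : Prop :=
  ∀ A : B, IsIso (cotensorComparison V B ε A)

/-- `B` is cotensored over `V`. -/
def Cotensored : Prop :=
  ∀ (v : V) (X : B), ∃ (C : B) (ε : v ⟶ (C ⟶[V] X)), IsCotensorCounit V B v X C ε

/-- `M` is closed under cotensors: `[v, m]` lies in `M` for `m ∈ M`. -/
def ClosedUnderCotensors (M : MorphismProperty B) : Prop :=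
  ∀ (v : V) ⦃X₁ X₂ : B⦄ (m : X₁ ⟶ X₂) {C₁ C₂ : B}
    (ε₁ : v ⟶ (C₁ ⟶[V] X₁)) (ε₂ : v ⟶ (C₂ ⟶[V] X₂)),
    IsCotensorCounit V B v X₁ C₁ ε₁ → IsCotensorCounit V B v X₂ C₂ ε₂ → M m →
      ∀ t : C₁ ⟶ C₂, ε₁ ≫ eHomWhiskerLeft V C₁ m = ε₂ ≫ eHomWhiskerRight V t X₂ → M t

/-- a `V`-functor from a `V`-category `J` to an enriched ordinary category `D`. -/
structure VFunctor (J : Type u₃) [EnrichedCategory V J]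
    (D : Type u₄) [Category.{v₄} D] [EnrichedOrdinaryCategory V D] where
  obj : J → D
  emap : ∀ X Y : J, (X ⟶[V] Y) ⟶ (obj X ⟶[V] obj Y)
  emap_id : ∀ X : J, eId V X ≫ emap X X = eId V (obj X)
  emap_comp : ∀ X Y Z : J,
    eComp V X Y Z ≫ emap X Z = (emap X Y ⊗ₘ emap Y Z) ≫ eComp V (obj X) (obj Y) (obj Z)

/-- the underlying action of a `V`-functor on ordinary morphisms. -/
def VFunctor.map' {J : Type u₃} [Category.{v₃} J] [EnrichedOrdinaryCategory V J]
    {D : Type u₄} [Category.{v₄} D] [EnrichedOrdinaryCategory V D]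
    (F : VFunctor V J D) {X Y : J} (f : X ⟶ Y) : F.obj X ⟶ F.obj Y :=
  (eHomEquiv V).symm (eHomEquiv V f ≫ F.emap X Y)

/-- a `V`-adjunction `F ⊣ G`, given by a `V`-natural isomorphism
`D(F A, X) ≅ A(A, G X)` of hom-objects. -/
structure VAdjunction {A : Type u₃} [Category.{v₃} A] [EnrichedOrdinaryCategory V A]
    {D : Type u₄} [Category.{v₄} D] [EnrichedOrdinaryCategory V D]
    (F : VFunctor V A D) (G : VFunctor V D A) where
  iso : ∀ (X : A) (Y : D), (F.obj X ⟶[V] Y) ≅ (X ⟶[V] G.obj Y)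
  nat_right : ∀ (X : A) (Y Y' : D),
    eComp V (F.obj X) Y Y' ≫ (iso X Y').hom =
      ((iso X Y).hom ⊗ₘ G.emap Y Y') ≫ eComp V X (G.obj Y) (G.obj Y')
  nat_left : ∀ (X X' : A) (Y : D),
    (F.emap X X' ▷ (F.obj X' ⟶[V] Y)) ≫ eComp V (F.obj X) (F.obj X') Y ≫ (iso X Y).hom =
      ((X ⟶[V] X') ◁ (iso X' Y).hom) ≫ eComp V X X' (G.obj Y)

/-- a `V`-functor `J → V` (a weight), presented by its uncurried action. -/
structure VWeight (J : Type u₃) [EnrichedCategory V J] where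
  obj : J → V
  act : ∀ j j' : J, obj j ⊗ (j ⟶[V] j') ⟶ obj j'
  act_id : ∀ j : J, (obj j ◁ eId V j) ≫ act j j = (ρ_ (obj j)).hom
  act_comp : ∀ j j' j'' : J,
    (α_ (obj j) (j ⟶[V] j') (j' ⟶[V] j'')).inv ≫ (act j j' ▷ (j' ⟶[V] j'')) ≫ act j' j'' =
      (obj j ◁ eComp V j j' j'') ≫ act j j''

/-- a `V`-natural transformation between `V`-functors. -/
structure VNatTrans {J : Type u₃} [EnrichedCategory V J]
    {D : Type u₄} [Category.{v₄} D] [EnrichedOrdinaryCategory V D]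
    (F G : VFunctor V J D) where
  app : ∀ j : J, F.obj j ⟶ G.obj j
  naturality : ∀ j j' : J,
    F.emap j j' ≫ eHomWhiskerLeft V (F.obj j) (app j') =
      G.emap j j' ≫ eHomWhiskerRight V (app j) (G.obj j')

/-- `cone` exhibits `L` as the `V`-enriched weighted (indexed) limit `[W, F]`. -/
structure IsWeightedLimit {J : Type u₃} [EnrichedCategory V J]
    {D : Type u₄} [Category.{v₄} D] [EnrichedOrdinaryCategory V D]
    (W : VWeight V J) (F : VFunctor V J D) (L : D)
    (cone : ∀ j : J, W.obj j ⟶ (L ⟶[V] F.obj j)) : Prop where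
  natural : ∀ j j' : J,
    W.act j j' ≫ cone j' =
      (cone j ▷ (j ⟶[V] j')) ≫ ((L ⟶[V] F.obj j) ◁ F.emap j j') ≫
        eComp V L (F.obj j) (F.obj j')
  universal : ∀ (A : D) (Z : V) (μ : ∀ j : J, Z ⊗ W.obj j ⟶ (A ⟶[V] F.obj j)),
    (∀ j j' : J,
      (Z ◁ W.act j j') ≫ μ j' =
        (α_ Z (W.obj j) (j ⟶[V] j')).inv ≫ (μ j ▷ (j ⟶[V] j')) ≫
          ((A ⟶[V] F.obj j) ◁ F.emap j j') ≫ eComp V A (F.obj j) (F.obj j')) →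
      ∃! t : Z ⟶ (A ⟶[V] L), ∀ j : J,
        (t ▷ W.obj j) ≫ ((A ⟶[V] L) ◁ cone j) ≫ eComp V A L (F.obj j) = μ j

/-- `B` is `V`-finitely-well-complete: it has finite `V`-limits and `V`-intersections
of arbitrary class-indexed families of `V`-strong monomorphisms. -/
def VFinitelyWellComplete : Prop :=
  HasFiniteVLimits V B ∧
    ∀ {ι : Type (max u₂ v₂)} {C : B} (X : ι → B) (f : ∀ i, X i ⟶ C),
      (∀ i, vStrongMono V B (f i)) →
        ∃ (P : B) (m : P ⟶ C) (π : ∀ i, P ⟶ X i), IsVFibreProduct V B f m π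

/-- `B` is finitely well-complete (ordinary sense): it has finite limits and
intersections of arbitrary class-indexed families of strong monomorphisms. -/
def OrdFinitelyWellComplete : Prop :=
  HasFiniteLimits B ∧
    ∀ {ι : Type (max u₂ v₂)} {C : B} (X : ι → B) (f : ∀ i, X i ⟶ C),
      (∀ i, ordStrongMono B (f i)) →
        ∃ (P : B) (m : P ⟶ C) (π : ∀ i, P ⟶ X i), OrdIsFibreProduct B f m π

end EnrichedFS

/-!
For every `A`, `B(A, [W, F])` is the weighted limit `[W, B(A, F -)]` in `V`, the comparison being
"compose with the limit cone". Orthogonality of `e` to each `m j` says that the squares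
`B(e, m j)` are pullbacks; a cone over the cospan `B(A₂, L') → B(A₁, L') ← B(A₁, L)` is therefore
lifted through these pullbacks componentwise, the lifts form a `V`-natural family because
naturality can be tested on the two legs of a pullback, and the family factors through
`B(A₂, [W, F])`. Hence the square `B(e, t)` is a pullback as well.
-/

lemma CategoryTheory.IsPullback.of_exists_lift {C : Type*} [Category C] {P X Y Z : C}
    {fst : P ⟶ X} {snd : P ⟶ Y} {f : X ⟶ Z} {g : Y ⟶ Z} (sq : CommSq fst snd f g)
    (exists_lift : ∀ {T : C} (a : T ⟶ X) (b : T ⟶ Y), a ≫ f = b ≫ g →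
      ∃ l : T ⟶ P, l ≫ fst = a ∧ l ≫ snd = b)
    (hom_ext : ∀ {T : C} (u w : T ⟶ P), u ≫ fst = w ≫ fst → u ≫ snd = w ≫ snd → u = w) :
    IsPullback fst snd f g := by
  choose lift lift_fst lift_snd using fun s : PullbackCone f g =>
    exists_lift s.fst s.snd s.condition
  exact IsPullback.of_isLimit' sq <| PullbackCone.IsLimit.mk sq.w lift lift_fst lift_snd
    fun s w hw₁ hw₂ => hom_ext _ _ (hw₁.trans (lift_fst s).symm) (hw₂.trans (lift_snd s).symm)

namespace EnrichedFS

section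

variable (V : Type u₁) [Category.{v₁} V] [MonoidalCategory V]
  {B : Type u₂} [Category.{v₂} B] [EnrichedOrdinaryCategory V B]

lemma eHomWhiskerLeft_whiskerRight_eComp (A : B) {X X' : B} (u : X ⟶ X') (Y : B) :
    (eHomWhiskerLeft V A u ▷ (X' ⟶[V] Y)) ≫ eComp V A X' Y =
      ((A ⟶[V] X) ◁ eHomWhiskerRight V u Y) ≫ eComp V A X Y := by
  dsimp [eHomWhiskerLeft, eHomWhiskerRight]
  rw [comp_whiskerRight, comp_whiskerRight, Category.assoc, Category.assoc, ← e_assoc',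
    associator_naturality_middle_assoc]
  simp [MonoidalCategory.whiskerLeft_comp]

/-- With `c` the cone of a weighted limit `L`, this reads a generalized element `x` of `B(A, L)`
as a family over the diagram. -/
def eCompPair {Z X : V} {A L Y : B} (x : Z ⟶ (A ⟶[V] L)) (c : X ⟶ (L ⟶[V] Y)) :
    Z ⊗ X ⟶ (A ⟶[V] Y) :=
  (x ▷ X) ≫ ((A ⟶[V] L) ◁ c) ≫ eComp V A L Y

variable {V}

lemma eCompPair_eHomWhiskerLeft {Z X : V} {A L Y Y' : B} (x : Z ⟶ (A ⟶[V] L))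
    (c : X ⟶ (L ⟶[V] Y)) (g : Y ⟶ Y') :
    eCompPair V x c ≫ eHomWhiskerLeft V A g = eCompPair V x (c ≫ eHomWhiskerLeft V L g) := by
  simp [eCompPair, eComp_eHomWhiskerLeft]

lemma eCompPair_eHomWhiskerRight {Z X : V} {A₁ A₂ L Y : B} (e : A₁ ⟶ A₂)
    (x : Z ⟶ (A₂ ⟶[V] L)) (c : X ⟶ (L ⟶[V] Y)) :
    eCompPair V x c ≫ eHomWhiskerRight V e Y = eCompPair V (x ≫ eHomWhiskerRight V e L) c := by
  simp only [eCompPair, Category.assoc, eComp_eHomWhiskerRight, comp_whiskerRight]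
  rw [whisker_exchange_assoc]

lemma eCompPair_comp_eHomWhiskerLeft {Z X : V} {A L L' Y : B} (u : L ⟶ L')
    (x : Z ⟶ (A ⟶[V] L)) (c : X ⟶ (L' ⟶[V] Y)) :
    eCompPair V (x ≫ eHomWhiskerLeft V A u) c = eCompPair V x (c ≫ eHomWhiskerRight V u Y) := by
  simp only [eCompPair, comp_whiskerRight, Category.assoc]
  rw [← whisker_exchange_assoc, eHomWhiskerLeft_whiskerRight_eComp,
    MonoidalCategory.whiskerLeft_comp_assoc]

lemma whiskerLeft_eCompPair {Z X X' : V} {A L Y : B} (x : Z ⟶ (A ⟶[V] L)) (f : X' ⟶ X)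
    (c : X ⟶ (L ⟶[V] Y)) :
    (Z ◁ f) ≫ eCompPair V x c = eCompPair V x (f ≫ c) := by
  simp only [eCompPair, MonoidalCategory.whiskerLeft_comp_assoc]
  rw [whisker_exchange_assoc]

lemma eCompPair_eCompPair {Z X X' : V} {A L Y Y' : B} (x : Z ⟶ (A ⟶[V] L))
    (c : X ⟶ (L ⟶[V] Y)) (d : X' ⟶ (Y ⟶[V] Y')) :
    eCompPair V x (eCompPair V c d) = (α_ Z X X').inv ≫ eCompPair V (eCompPair V x c) d := by
  simp only [eCompPair, MonoidalCategory.whiskerLeft_comp, comp_whiskerRight, Category.assoc]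
  rw [← e_assoc, associator_inv_naturality_right_assoc, associator_inv_naturality_middle_assoc,
    associator_inv_naturality_left_assoc, whisker_exchange_assoc]

variable {J : Type u₃} [EnrichedCategory V J] {W : VWeight V J}

/-- Such families are the maps `Z ⟶ [W, B(A, F -)]` into the weighted limit in `V`. -/
def IsWeightedCone (W : VWeight V J) (F : VFunctor V J B) {A : B} {Z : V}
    (μ : ∀ j : J, Z ⊗ W.obj j ⟶ (A ⟶[V] F.obj j)) : Prop :=
  ∀ j j' : J, (Z ◁ W.act j j') ≫ μ j' =
    (α_ Z (W.obj j) (j ⟶[V] j')).inv ≫ eCompPair V (μ j) (F.emap j j')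

namespace IsWeightedLimit

variable {F : VFunctor V J B} {L : B} {cone : ∀ j : J, W.obj j ⟶ (L ⟶[V] F.obj j)}

lemma isWeightedCone_eCompPair (hL : IsWeightedLimit V W F L cone) {A : B} {Z : V}
    (x : Z ⟶ (A ⟶[V] L)) : IsWeightedCone W F fun j => eCompPair V x (cone j) := by
  intro j j'
  rw [whiskerLeft_eCompPair, hL.natural j j']
  exact eCompPair_eCompPair x (cone j) (F.emap j j')

lemma exists_eCompPair_eq (hL : IsWeightedLimit V W F L cone) {A : B} {Z : V}
    {μ : ∀ j : J, Z ⊗ W.obj j ⟶ (A ⟶[V] F.obj j)} (hμ : IsWeightedCone W F μ) :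
    ∃ x : Z ⟶ (A ⟶[V] L), ∀ j, eCompPair V x (cone j) = μ j :=
  (hL.universal A Z μ hμ).exists

lemma hom_ext (hL : IsWeightedLimit V W F L cone) {A : B} {Z : V} {x y : Z ⟶ (A ⟶[V] L)}
    (h : ∀ j, eCompPair V x (cone j) = eCompPair V y (cone j)) : x = y :=
  (hL.universal A Z _ (hL.isWeightedCone_eCompPair y)).unique h fun _ => rfl

end IsWeightedLimit

lemma VNatTrans.eCompPair_emap_eHomWhiskerLeft {F F' : VFunctor V J B} (m : VNatTrans V F F')
    {A : B} {Z : V} {j : J} (x : Z ⟶ (A ⟶[V] F.obj j)) (j' : J) :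
    eCompPair V x (F.emap j j') ≫ eHomWhiskerLeft V A (m.app j') =
      eCompPair V (x ≫ eHomWhiskerLeft V A (m.app j)) (F'.emap j j') := by
  rw [eCompPair_eHomWhiskerLeft, m.naturality, eCompPair_comp_eHomWhiskerLeft]

lemma IsWeightedCone.of_vOrth {F F' : VFunctor V J B} (m : VNatTrans V F F') {A₁ A₂ : B}
    {e : A₁ ⟶ A₂} (horth : ∀ j, VOrth V B e (m.app j)) {Z : V}
    {μ : ∀ j : J, Z ⊗ W.obj j ⟶ (A₂ ⟶[V] F.obj j)}
    (h₁ : IsWeightedCone W F' fun j => μ j ≫ eHomWhiskerLeft V A₂ (m.app j))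
    (h₂ : IsWeightedCone W F fun j => μ j ≫ eHomWhiskerRight V e (F.obj j)) :
    IsWeightedCone W F μ := by
  intro j j'
  apply (horth j').hom_ext
  · rw [Category.assoc, Category.assoc, h₁ j j', m.eCompPair_emap_eHomWhiskerLeft]
  · rw [Category.assoc, Category.assoc, h₂ j j', eCompPair_eHomWhiskerRight]

lemma vOrth_of_isWeightedLimit {F F' : VFunctor V J B} (m : VNatTrans V F F') {L L' : B}
    {cone : ∀ j : J, W.obj j ⟶ (L ⟶[V] F.obj j)} {cone' : ∀ j : J, W.obj j ⟶ (L' ⟶[V] F'.obj j)}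
    (hL : IsWeightedLimit V W F L cone) (hL' : IsWeightedLimit V W F' L' cone') (t : L ⟶ L')
    (ht : ∀ j : J, cone j ≫ eHomWhiskerLeft V L (m.app j) =
      cone' j ≫ eHomWhiskerRight V t (F'.obj j))
    {A₁ A₂ : B} (e : A₁ ⟶ A₂) (horth : ∀ j, VOrth V B e (m.app j)) :
    VOrth V B e t := by
  have comm : ∀ {A : B} {Z : V} (x : Z ⟶ (A ⟶[V] L)) (j : J),
      eCompPair V (x ≫ eHomWhiskerLeft V A t) (cone' j) =
        eCompPair V x (cone j) ≫ eHomWhiskerLeft V A (m.app j) := by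
    intro A Z x j
    rw [eCompPair_comp_eHomWhiskerLeft, ← ht, eCompPair_eHomWhiskerLeft]
  refine IsPullback.of_exists_lift ⟨eHom_whisker_exchange V e t⟩ ?_ ?_
  · intro Z a b hab
    have square : ∀ j, eCompPair V a (cone' j) ≫ eHomWhiskerRight V e (F'.obj j) =
        eCompPair V b (cone j) ≫ eHomWhiskerLeft V A₁ (m.app j) := fun j => by
      rw [eCompPair_eHomWhiskerRight, hab, comm]
    obtain ⟨μ, hμ₁, hμ₂⟩ : ∃ μ : ∀ j, Z ⊗ W.obj j ⟶ (A₂ ⟶[V] F.obj j),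
        (∀ j, μ j ≫ eHomWhiskerLeft V A₂ (m.app j) = eCompPair V a (cone' j)) ∧
          ∀ j, μ j ≫ eHomWhiskerRight V e (F.obj j) = eCompPair V b (cone j) :=
      ⟨fun j => (horth j).lift _ _ (square j), fun j => (horth j).lift_fst _ _ _,
        fun j => (horth j).lift_snd _ _ _⟩
    have hμ : IsWeightedCone W F μ := IsWeightedCone.of_vOrth m horth
      (by simpa only [hμ₁] using hL'.isWeightedCone_eCompPair a)
      (by simpa only [hμ₂] using hL.isWeightedCone_eCompPair b)
    obtain ⟨l, hl⟩ := hL.exists_eCompPair_eq hμ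
    refine ⟨l, hL'.hom_ext fun j => ?_, hL.hom_ext fun j => ?_⟩
    · rw [comm, hl, hμ₁]
    · rw [← eCompPair_eHomWhiskerRight, hl, hμ₂]
  · intro Z u w h₁ h₂
    refine hL.hom_ext fun j => (horth j).hom_ext ?_ ?_
    · rw [← comm, h₁, comm]
    · rw [eCompPair_eHomWhiskerRight, h₂, ← eCompPair_eHomWhiskerRight]

end

variable (V : Type u₁) [Category.{v₁} V] [MonoidalCategory V] [SymmetricCategory V]
  [MonoidalClosed V]
variable (B : Type u₂) [Category.{v₂} B] [EnrichedOrdinaryCategory V B]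

/-- A morphism induced between `V`-enriched weighted limits by a `V`-natural
transformation whose components lie in `M` again lies in `M`. -/
theorem stmt1 (E M : MorphismProperty B) (h : IsVPrefactorization V B E M)
    {J : Type u₃} [EnrichedCategory V J] (W : VWeight V J) (F F' : VFunctor V J B)
    (m : VNatTrans V F F') (hm : ∀ j : J, M (m.app j))
    {L L' : B} (cone : ∀ j : J, W.obj j ⟶ (L ⟶[V] F.obj j))
    (cone' : ∀ j : J, W.obj j ⟶ (L' ⟶[V] F'.obj j))
    (hL : IsWeightedLimit V W F L cone) (hL' : IsWeightedLimit V W F' L' cone')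
    (t : L ⟶ L')
    (ht : ∀ j : J, cone j ≫ eHomWhiskerLeft V L (m.app j) =
      cone' j ≫ eHomWhiskerRight V t (F'.obj j)) :
    M t := by
  rw [← h.1] at hm ⊢
  exact fun _ _ e he => vOrth_of_isWeightedLimit m hL hL' t ht e fun j => hm j e he

end EnrichedFS
end

section
/- An ordinary prefactorization system (E,M) on a V-category B is a V-prefactorization system on B as soon as each e ∈ E is V-orthogonal to each m ∈ M. -/
open CategoryTheory CategoryTheory.Limits CategoryTheory.MonoidalCategory

universe w v₁ v₂ v₃ v₄ u₁ u₂ u₃ u₄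

namespace EnrichedFS

variable (V : Type u₁) [Category.{v₁} V] [MonoidalCategory V] [SymmetricCategory V]
  [MonoidalClosed V]
variable (B : Type u₂) [Category.{v₂} B] [EnrichedOrdinaryCategory V B]

section

variable (𝒱 : Type*) [Category 𝒱] [MonoidalCategory 𝒱] {C : Type*} [Category C]
  [EnrichedOrdinaryCategory 𝒱 C]

lemma eHomEquiv_comp_eq_eHomWhiskerLeft {X Y Z : C} (f : X ⟶ Y) (g : Y ⟶ Z) :
    eHomEquiv 𝒱 (f ≫ g) = eHomEquiv 𝒱 f ≫ eHomWhiskerLeft 𝒱 X g := by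
  simp only [eHomEquiv_comp, eHomWhiskerLeft, tensorHom_def', rightUnitor_inv_naturality_assoc,
    whisker_exchange_assoc, unitors_inv_equal, Category.assoc]

lemma eHomEquiv_comp_eq_eHomWhiskerRight {X Y Z : C} (f : X ⟶ Y) (g : Y ⟶ Z) :
    eHomEquiv 𝒱 (f ≫ g) = eHomEquiv 𝒱 g ≫ eHomWhiskerRight 𝒱 f Z := by
  simp only [eHomEquiv_comp, eHomWhiskerRight, MonoidalCategory.tensorHom_def,
    leftUnitor_inv_naturality_assoc, ← whisker_exchange_assoc, unitors_inv_equal, Category.assoc]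

/-- Global elements `𝟙_ 𝒱 ⟶ (A ⟶[𝒱] X)` are the morphisms `A ⟶ X`, so the universal property
of the pullback `VOrth` at `𝟙_ 𝒱` is exactly unique diagonal filling. -/
lemma ordOrth_of_vOrth {A₁ A₂ X₁ X₂ : C} {e : A₁ ⟶ A₂} {m : X₁ ⟶ X₂}
    (hv : VOrth 𝒱 C e m) : OrdOrth C e m := by
  intro u v huv
  have hsq :
      eHomEquiv 𝒱 v ≫ eHomWhiskerRight 𝒱 e X₂ = eHomEquiv 𝒱 u ≫ eHomWhiskerLeft 𝒱 A₁ m := by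
    rw [← eHomEquiv_comp_eq_eHomWhiskerRight, ← eHomEquiv_comp_eq_eHomWhiskerLeft, huv]
  refine ⟨(eHomEquiv 𝒱).symm (hv.lift _ _ hsq), ⟨?_, ?_⟩, fun d ⟨hed, hdm⟩ => ?_⟩
  · rw [← (eHomEquiv 𝒱).apply_eq_iff_eq, eHomEquiv_comp_eq_eHomWhiskerRight,
      Equiv.apply_symm_apply, hv.lift_snd]
  · rw [← (eHomEquiv 𝒱).apply_eq_iff_eq, eHomEquiv_comp_eq_eHomWhiskerLeft,
      Equiv.apply_symm_apply, hv.lift_fst]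
  · rw [Equiv.eq_symm_apply]
    apply hv.hom_ext
    · rw [hv.lift_fst, ← eHomEquiv_comp_eq_eHomWhiskerLeft, hdm]
    · rw [hv.lift_snd, ← eHomEquiv_comp_eq_eHomWhiskerRight, hed]

lemma vRlp_le_ordRlp (H : MorphismProperty C) : vRlp 𝒱 C H ≤ ordRlp C H :=
  fun _ _ _ hm _ _ e he => ordOrth_of_vOrth 𝒱 (hm e he)

lemma vLlp_le_ordLlp (H : MorphismProperty C) : vLlp 𝒱 C H ≤ ordLlp C H :=
  fun _ _ _ he _ _ m hm => ordOrth_of_vOrth 𝒱 (he m hm)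

end

/-- An ordinary prefactorization system `(E, M)` on a `V`-category `B` is a
`V`-prefactorization system as soon as each `e ∈ E` is `V`-orthogonal to each `m ∈ M`. -/
theorem stmt2 (E M : MorphismProperty B) (h : IsOrdPrefactorization B E M)
    (horth : ∀ ⦃A₁ A₂ X₁ X₂ : B⦄ (e : A₁ ⟶ A₂) (m : X₁ ⟶ X₂),
      E e → M m → VOrth V B e m) :
    IsVPrefactorization V B E M :=
  ⟨le_antisymm ((vRlp_le_ordRlp V E).trans h.1.le) fun _ _ m hm _ _ e he => horth e m he hm,
    le_antisymm ((vLlp_le_ordLlp V M).trans h.2.le) fun _ _ e he _ _ m hm => horth e m he hm⟩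

end EnrichedFS
end

section
/- Let E, M be classes of morphisms in a V-category B. Then (E,M) is a V-factorization system on B if and only if the following three conditions hold: (1) each of E and M is closed under composition with isomorphisms; (2) each e ∈ E is V-orthogonal to each m ∈ M; (3) every morphism of B factors as a morphism in E followed by a morphism in M. -/
open CategoryTheory CategoryTheory.Limits CategoryTheory.MonoidalCategory

universe w v₁ v₂ v₃ v₄ u₁ u₂ u₃ u₄

namespace EnrichedFS

variable (V : Type u₁) [Category.{v₁} V] [MonoidalCategory V] [SymmetricCategory V]
  [MonoidalClosed V]
variable (B : Type u₂) [Category.{v₂} B] [EnrichedOrdinaryCategory V B]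

/-!
`V`-orthogonality is a pullback condition, and pasting a pullback with a square whose two
parallel sides are invertible gives again a pullback; so every `E^{↓V}` and `M^{↑V}` is
closed under composition with isomorphisms. Conversely, take `m ∈ E^{↓V}` and factor it as
`m = e ≫ m'` with `e ∈ E`, `m' ∈ M`. Global sections turn `V`-orthogonality into unique
diagonal fillers; the filler of the square `𝟙 ≫ m = e ≫ m'` is a retraction of `e`, and
uniqueness of fillers against `m'` makes it an inverse. Hence `m` is an isomorphism composed
with `m'`, so lies in `M`; dually `M^{↑V} ⊆ E`.
-/

section Development

omit [SymmetricCategory V] [MonoidalClosed V]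

variable {B}

lemma eHomEquiv_comp_eHomWhiskerLeft {X Y Z : B} (f : X ⟶ Y) (g : Y ⟶ Z) :
    eHomEquiv V f ≫ eHomWhiskerLeft V X g = eHomEquiv V (f ≫ g) := by
  rw [eHomEquiv_comp, eHomWhiskerLeft, MonoidalCategory.tensorHom_def, unitors_inv_equal]
  simp only [Category.assoc]
  rw [← rightUnitor_inv_naturality_assoc]

lemma eHomEquiv_comp_eHomWhiskerRight {X Y Z : B} (f : X ⟶ Y) (g : Y ⟶ Z) :
    eHomEquiv V g ≫ eHomWhiskerRight V f Z = eHomEquiv V (f ≫ g) := by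
  rw [eHomEquiv_comp, eHomWhiskerRight, tensorHom_def']
  simp only [Category.assoc]
  rw [← leftUnitor_inv_naturality_assoc]

instance isIso_eHomWhiskerLeft (A : B) {X Y : B} (i : X ⟶ Y) [IsIso i] :
    IsIso (eHomWhiskerLeft V A i) :=
  inferInstanceAs (IsIso (((eHomFunctor V B).obj (Opposite.op A)).map i))

instance isIso_eHomWhiskerRight {X Y : B} (i : X ⟶ Y) [IsIso i] (A : B) :
    IsIso (eHomWhiskerRight V i A) :=
  inferInstanceAs (IsIso (((eHomFunctor V B).map i.op).app A))

section Orthogonality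

variable {A₀ A₁ A₂ A₃ X₀ X₁ X₂ X₃ : B}

lemma vOrth_of_isIso_left (i : A₁ ⟶ A₂) [IsIso i] (m : X₁ ⟶ X₂) : VOrth V B i m :=
  IsPullback.of_vert_isIso ⟨eHom_whisker_exchange V i m⟩

lemma vOrth_of_isIso_right (e : A₁ ⟶ A₂) (i : X₁ ⟶ X₂) [IsIso i] : VOrth V B e i :=
  IsPullback.of_horiz_isIso ⟨eHom_whisker_exchange V e i⟩

lemma VOrth.comp_isIso_left {e : A₁ ⟶ A₂} {m : X₁ ⟶ X₂} (h : VOrth V B e m)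
    (i : A₂ ⟶ A₃) [IsIso i] : VOrth V B (e ≫ i) m := by
  rw [VOrth, eHomWhiskerRight_comp, eHomWhiskerRight_comp]
  exact (vOrth_of_isIso_left V i m).paste_vert h

lemma VOrth.isIso_comp_left {e : A₁ ⟶ A₂} {m : X₁ ⟶ X₂} (h : VOrth V B e m)
    (i : A₀ ⟶ A₁) [IsIso i] : VOrth V B (i ≫ e) m := by
  rw [VOrth, eHomWhiskerRight_comp, eHomWhiskerRight_comp]
  exact h.paste_vert (vOrth_of_isIso_left V i m)

lemma VOrth.comp_isIso_right {e : A₁ ⟶ A₂} {m : X₁ ⟶ X₂} (h : VOrth V B e m)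
    (i : X₂ ⟶ X₃) [IsIso i] : VOrth V B e (m ≫ i) := by
  rw [VOrth, eHomWhiskerLeft_comp, eHomWhiskerLeft_comp]
  exact h.paste_horiz (vOrth_of_isIso_right V e i)

lemma VOrth.isIso_comp_right {e : A₁ ⟶ A₂} {m : X₁ ⟶ X₂} (h : VOrth V B e m)
    (i : X₀ ⟶ X₁) [IsIso i] : VOrth V B e (i ≫ m) := by
  rw [VOrth, eHomWhiskerLeft_comp, eHomWhiskerLeft_comp]
  exact (vOrth_of_isIso_right V e i).paste_horiz h

lemma closedUnderIsoComp_vLlp (M : MorphismProperty B) : ClosedUnderIsoComp B (vLlp V B M) :=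
  ⟨fun _ _ _ _ i he _ _ _ m hm => (he m hm).comp_isIso_left V i,
    fun _ _ _ i _ _ he _ _ m hm => (he m hm).isIso_comp_left V i⟩

lemma closedUnderIsoComp_vRlp (E : MorphismProperty B) : ClosedUnderIsoComp B (vRlp V B E) :=
  ⟨fun _ _ _ _ i hm _ _ _ e he => (hm e he).comp_isIso_right V i,
    fun _ _ _ i _ _ hm _ _ e he => (hm e he).isIso_comp_right V i⟩

end Orthogonality

lemma VOrth.ordOrth {A₁ A₂ X₁ X₂ : B} {e : A₁ ⟶ A₂} {m : X₁ ⟶ X₂} (h : VOrth V B e m) :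
    OrdOrth B e m := by
  intro u v huv
  have hw : eHomEquiv V v ≫ eHomWhiskerRight V e X₂ = eHomEquiv V u ≫ eHomWhiskerLeft V A₁ m := by
    rw [eHomEquiv_comp_eHomWhiskerRight, eHomEquiv_comp_eHomWhiskerLeft, huv]
  refine ⟨(eHomEquiv V).symm (h.lift _ _ hw), ⟨?_, ?_⟩, fun d ⟨hd₁, hd₂⟩ => ?_⟩
  · rw [← (eHomEquiv V).apply_eq_iff_eq, ← eHomEquiv_comp_eHomWhiskerRight,
      Equiv.apply_symm_apply, h.lift_snd]
  · rw [← (eHomEquiv V).apply_eq_iff_eq, ← eHomEquiv_comp_eHomWhiskerLeft,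
      Equiv.apply_symm_apply, h.lift_fst]
  · rw [Equiv.eq_symm_apply]
    apply h.hom_ext
    · rw [h.lift_fst, eHomEquiv_comp_eHomWhiskerLeft, hd₂]
    · rw [h.lift_snd, eHomEquiv_comp_eHomWhiskerRight, hd₁]

lemma OrdOrth.isIso_left {A Z X : B} {e : A ⟶ Z} {m : Z ⟶ X} (hf : OrdOrth B e (e ≫ m))
    (hm : OrdOrth B e m) : IsIso e := by
  obtain ⟨r, ⟨hr₁, hr₂⟩, -⟩ := hf (𝟙 A) m (Category.id_comp _)
  have hr : r ≫ e = 𝟙 Z := (hm e m rfl).unique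
    ⟨by rw [← Category.assoc, hr₁, Category.id_comp], by rw [Category.assoc, hr₂]⟩
    ⟨Category.comp_id e, Category.id_comp m⟩
  exact ⟨r, hr₁, hr⟩

lemma OrdOrth.isIso_right {A Z X : B} {e : A ⟶ Z} {m : Z ⟶ X} (hf : OrdOrth B (e ≫ m) m)
    (he : OrdOrth B e m) : IsIso m := by
  obtain ⟨s, ⟨hs₁, hs₂⟩, -⟩ := hf e (𝟙 X) (Category.comp_id _).symm
  have hs : m ≫ s = 𝟙 Z := (he e m rfl).unique
    ⟨by rw [← Category.assoc, hs₁], by rw [Category.assoc, hs₂, Category.comp_id]⟩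
    ⟨Category.comp_id e, Category.id_comp m⟩
  exact ⟨s, hs, hs₂⟩

section Factorizations

variable {E M : MorphismProperty B}
  (horth : ∀ ⦃A₁ A₂ X₁ X₂ : B⦄ (e : A₁ ⟶ A₂) (m : X₁ ⟶ X₂), E e → M m → VOrth V B e m)
  (hfact : FactorizationsExist B E M)
include horth hfact

lemma vRlp_le_of_factorizationsExist (hM : ClosedUnderIsoComp B M) : vRlp V B E ≤ M := by
  intro _ _ f hf
  obtain ⟨_, e, m, he, hm, rfl⟩ := hfact f
  have : IsIso e := ((hf e he).ordOrth V).isIso_left ((horth e m he hm).ordOrth V)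
  exact hM.2 e m this hm

lemma vLlp_le_of_factorizationsExist (hE : ClosedUnderIsoComp B E) : vLlp V B M ≤ E := by
  intro _ _ f hf
  obtain ⟨_, e, m, he, hm, rfl⟩ := hfact f
  have : IsIso m := ((hf m hm).ordOrth V).isIso_right ((horth e m he hm).ordOrth V)
  exact hE.1 e m he this

end Factorizations

end Development

/-- Characterization of `V`-factorization systems: `(E,M)` is a `V`-factorization
system iff `E` and `M` are closed under composition with isomorphisms, each `e ∈ E` is
`V`-orthogonal to each `m ∈ M`, and `(E,M)`-factorizations exist. -/
theorem stmt3 (E M : MorphismProperty B) :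
    IsVFactorizationSystem V B E M ↔
      (ClosedUnderIsoComp B E ∧ ClosedUnderIsoComp B M ∧
        (∀ ⦃A₁ A₂ X₁ X₂ : B⦄ (e : A₁ ⟶ A₂) (m : X₁ ⟶ X₂), E e → M m → VOrth V B e m) ∧
        FactorizationsExist B E M) := by
  constructor
  · rintro ⟨⟨hR, hL⟩, hfact⟩
    refine ⟨hL ▸ closedUnderIsoComp_vLlp V M, hR ▸ closedUnderIsoComp_vRlp V E,
      fun _ _ _ _ e m he hm => ?_, hfact⟩
    rw [← hR] at hm
    exact hm e he
  · rintro ⟨hE, hM, horth, hfact⟩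
    refine ⟨⟨?_, ?_⟩, hfact⟩
    · exact le_antisymm (vRlp_le_of_factorizationsExist V horth hfact hM)
        fun _ _ m hm _ _ e he => horth e m he hm
    · exact le_antisymm (vLlp_le_of_factorizationsExist V horth hfact hE)
        fun _ _ e he _ _ m hm => horth e m he hm

end EnrichedFS
end
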